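/- Let n ≥ 2 and f(k) = n^k + 1. Then for every d ≥ 1 and μ ≥ 0, 𝒩(d,μ,f) = Σ_{ℓ=0}^{min(d,μ)} Σ_{k=0}^{μ−ℓ} C(d,ℓ) · (−1)^ℓ · (2n)^ℓ · (n+1)^{d−ℓ} · C(d+k−1, k) · C(d+μ−ℓ−k−1, μ−ℓ−k) · n^k (an identity in ℤ). -/

import Mathlib

/-!
`𝒩(d, μ, f)` is the coefficient of `X^(d+μ)` in `G^d`, where `G = ∑_{j ≥ 1} f(j) X^j`.
For `f(j) = a^j + 1` we have `G = aX/(1 - aX) + X/(1 - X) = X (a + 1 - 2aX) / ((1 - aX)(1 - X))`,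
so `G^d` is `X^d` times the binomial expansion of `(a + 1 - 2aX)^d` times
`(1 - aX)^(-d) (1 - X)^(-d)`, whose coefficients are `∑_k a^k C(d+k-1, k) C(d+m-k-1, m-k)`.
-/

/-- Multi-indices `i : Fin d → ℕ` with `i k ≥ 1` for all `k` and `∑ k, i k = d + μ`. -/
def smolyakIndices (d μ : ℕ) : Finset (Fin d → ℕ) :=
  (Fintype.piFinset fun _ => Finset.Icc 1 (d + μ)).filter fun i => ∑ k, i k = d + μ

/-- `𝒩(d, μ, f) = ∑_{|i| = d + μ, i ≥ 1} ∏ₖ f(iₖ)`. -/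
def calN (f : ℕ → ℕ) (d μ : ℕ) : ℕ :=
  ∑ i ∈ smolyakIndices d μ, ∏ k, f (i k)

open PowerSeries

noncomputable def posGenFun {R : Type*} [Semiring R] (f : ℕ → R) : R⟦X⟧ :=
  mk fun j => if j = 0 then 0 else f j

open Finset in
theorem mem_smolyakIndices {d μ : ℕ} {i : Fin d → ℕ} :
    i ∈ smolyakIndices d μ ↔ (∀ k, 1 ≤ i k) ∧ ∑ k, i k = d + μ := by
  simp only [smolyakIndices, mem_filter, Fintype.mem_piFinset, mem_Icc]
  refine ⟨fun h => ⟨fun k => (h.1 k).1, h.2⟩, fun h => ⟨fun k => ⟨h.1 k, ?_⟩, h.2⟩⟩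
  exact h.2 ▸ single_le_sum (fun j _ => Nat.zero_le (i j)) (mem_univ k)

section CommSemiring

variable {R : Type*} [CommSemiring R]

open Finset in
theorem calN_eq_coeff_posGenFun_pow (f : ℕ → ℕ) (d μ : ℕ) :
    (calN f d μ : R) = coeff (d + μ) (posGenFun (fun j => (f j : R)) ^ d) := by
  have hterm : ∀ i : Fin d → ℕ, (∀ k, 1 ≤ i k) →
      ((∏ k, f (i k) : ℕ) : R) = ∏ k, coeff (i k) (posGenFun fun j => (f j : R)) := by
    intro i hi
    push_cast
    exact prod_congr rfl fun k _ => by simp [posGenFun, Nat.one_le_iff_ne_zero.mp (hi k)]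
  rw [← Fin.prod_const, coeff_prod, calN, Nat.cast_sum]
  refine sum_bij_ne_zero (fun i _ _ => Finsupp.equivFunOnFinite.symm i) ?_ ?_ ?_ ?_
  · intro i hi _
    simpa [mem_finsuppAntidiag] using (mem_smolyakIndices.mp hi).2
  · intro i _ _ j _ _ h
    simpa using h
  · intro l hl hne
    have hpos : ∀ k, 1 ≤ l k := fun k => Nat.one_le_iff_ne_zero.mpr fun h0 =>
      hne (prod_eq_zero (mem_univ k) (by simp [posGenFun, h0]))
    rw [mem_finsuppAntidiag] at hl
    exact ⟨l, mem_smolyakIndices.mpr ⟨hpos, hl.1⟩, hterm l hpos ▸ hne, by simp⟩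
  · intro i hi _
    exact hterm i (mem_smolyakIndices.mp hi).1

theorem coeff_C_add_C_mul_X_pow (b c : R) (d ℓ : ℕ) :
    coeff ℓ ((C b + C c * X) ^ d) = d.choose ℓ * c ^ ℓ * b ^ (d - ℓ) := by
  rw [add_comm, add_pow, map_sum]
  have hterm : ∀ m, (C c * X) ^ m * C b ^ (d - m) * (d.choose m : R⟦X⟧) =
      C (d.choose m * c ^ m * b ^ (d - m)) * X ^ m := fun m => by
    simp only [map_mul, map_pow, map_natCast]; ring
  simp_rw [hterm, coeff_C_mul_X_pow]
  rw [Finset.sum_ite_eq, ite_eq_left_iff, Finset.mem_range]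
  intro h
  rw [Nat.choose_eq_zero_of_lt (by omega), Nat.cast_zero, zero_mul, zero_mul]

theorem coeff_rescale_mul_self (a : R) (g : R⟦X⟧) (m : ℕ) :
    coeff m (rescale a g * g) =
      ∑ k ∈ Finset.range (m + 1), a ^ k * coeff k g * coeff (m - k) g := by
  rw [coeff_mul, Finset.Nat.sum_antidiagonal_eq_sum_range_succ_mk]
  simp only [coeff_rescale]

end CommSemiring

section CommRing

variable {R : Type*} [CommRing R]

/-- At `d = 0` the truncated `d + k - 1` still gives the coefficients of `1`. -/
theorem mk_one_pow_eq_mk_choose (d : ℕ) :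
    (mk 1 : R⟦X⟧) ^ d = mk fun k => ((d + k - 1).choose k : R) := by
  rcases d with _ | e
  · ext k
    rcases k with _ | k <;> simp [coeff_one]
  · rw [mk_one_pow_eq_mk_choose_add]
    ext k
    simp only [coeff_mk, add_right_comm e 1 k, Nat.add_sub_cancel]
    rw [Nat.choose_symm_add]

theorem posGenFun_pow_add_one (a : R) :
    posGenFun (fun j => a ^ j + 1) =
      X * (C (a + 1) - C (2 * a) * X) * (rescale a (mk 1) * mk 1) := by
  have hgeom : (mk 1 : R⟦X⟧) * (1 - X) = 1 := mk_one_mul_one_sub_eq_one R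
  have hgeom_a : rescale a (mk 1) * (1 - C a * X) = 1 := by
    simpa using congrArg (rescale a) hgeom
  have hsplit : posGenFun (fun j => a ^ j + 1) = C a * X * rescale a (mk 1) + X * mk 1 := by
    ext (_ | j)
    · simp [posGenFun]
    · simp [posGenFun, coeff_succ_X_mul, mul_assoc, coeff_rescale, pow_succ']
  rw [hsplit, map_add, map_mul, map_one, map_ofNat]
  -- `a + 1 - 2aX = (1 - aX) + a(1 - X)`
  linear_combination (-(C a * X * rescale a (mk 1))) * hgeom - (X * mk 1) * hgeom_a

theorem coeff_posGenFun_pow_add_one_pow (a : R) (d μ : ℕ) :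
    coeff (d + μ) (posGenFun (fun j => a ^ j + 1) ^ d) =
      ∑ ℓ ∈ Finset.range (min d μ + 1), ∑ k ∈ Finset.range (μ - ℓ + 1),
        (d.choose ℓ : R) * (-1) ^ ℓ * (2 * a) ^ ℓ * (a + 1) ^ (d - ℓ) *
          ((d + k - 1).choose k : R) * ((d + μ - ℓ - k - 1).choose (μ - ℓ - k) : R) * a ^ k := by
  have hfactor : posGenFun (fun j => a ^ j + 1) ^ d = X ^ d *
      ((C (a + 1) + C (-(2 * a)) * X) ^ d * (rescale a ((mk 1) ^ d) * (mk 1) ^ d)) := by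
    rw [posGenFun_pow_add_one, map_neg, neg_mul, ← sub_eq_add_neg, mul_pow, mul_pow, mul_pow,
      map_pow, mul_assoc]
  rw [hfactor, coeff_X_pow_mul', if_pos (Nat.le_add_right d μ), Nat.add_sub_cancel_left,
    coeff_mul, Finset.Nat.sum_antidiagonal_eq_sum_range_succ_mk]
  simp only [coeff_C_add_C_mul_X_pow, coeff_rescale_mul_self, mk_one_pow_eq_mk_choose, coeff_mk]
  symm
  rw [← Finset.sum_subset (Finset.range_subset_range.mpr (by omega : min d μ + 1 ≤ μ + 1))]
  · refine Finset.sum_congr rfl fun ℓ hℓ => ?_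
    rw [Finset.mul_sum]
    refine Finset.sum_congr rfl fun k hk => ?_
    rw [Finset.mem_range] at hℓ hk
    rw [show d + (μ - ℓ - k) - 1 = d + μ - ℓ - k - 1 by omega, neg_pow (2 * a)]
    ring
  · intro ℓ hℓμ hℓ
    rw [Finset.mem_range] at hℓμ hℓ
    rw [Nat.choose_eq_zero_of_lt (by omega), Nat.cast_zero, zero_mul, zero_mul, zero_mul]

end CommRing

theorem calN_of_pow_add_one_general (n : ℕ) (d μ : ℕ) :
    (calN (fun k => n ^ k + 1) d μ : ℤ) =
      ∑ ℓ ∈ Finset.range (min d μ + 1), ∑ k ∈ Finset.range (μ - ℓ + 1),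
        (d.choose ℓ : ℤ) * (-1) ^ ℓ * (2 * (n : ℤ)) ^ ℓ * ((n : ℤ) + 1) ^ (d - ℓ) *
          ((d + k - 1).choose k : ℤ) * ((d + μ - ℓ - k - 1).choose (μ - ℓ - k) : ℤ) *
          (n : ℤ) ^ k := by
  rw [calN_eq_coeff_posGenFun_pow (R := ℤ)]
  push_cast
  exact coeff_posGenFun_pow_add_one_pow (n : ℤ) d μ

/-- For `f(k) = nᵏ + 1` (with `n ≥ 2`),
`𝒩(d, μ, f) = ∑_{ℓ=0}^{min(d,μ)} ∑_{k=0}^{μ-ℓ} C(d,ℓ) (-1)ˡ (2n)ˡ (n+1)^(d-ℓ)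
  C(d+k-1, k) C(d+μ-ℓ-k-1, μ-ℓ-k) nᵏ` (an identity in `ℤ`). -/
theorem calN_of_pow_add_one (n : ℕ) (hn : 2 ≤ n) (d μ : ℕ) (hd : 1 ≤ d) :
    (calN (fun k => n ^ k + 1) d μ : ℤ) =
      ∑ ℓ ∈ Finset.range (min d μ + 1), ∑ k ∈ Finset.range (μ - ℓ + 1),
        (d.choose ℓ : ℤ) * (-1) ^ ℓ * (2 * (n : ℤ)) ^ ℓ * ((n : ℤ) + 1) ^ (d - ℓ) *
          ((d + k - 1).choose k : ℤ) * ((d + μ - ℓ - k - 1).choose (μ - ℓ - k) : ℤ) *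
          (n : ℤ) ^ k :=
  calN_of_pow_add_one_general n d μ
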